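/- arXiv:2602.02764 — 2 statements merged into one kernel-verified Lean document; each statement's English description precedes it below -/
import Mathlib

section
/- Let j ≥ 1 be a natural number and let v ∈ F₃ satisfy |v| ≤ 5^j. Suppose x(v,j) = z·y where z is an initial block of the reduced word of x(v,j) and y is the rest, i.e. |x(v,j)| = |z| + |y|. If |z| < (1/2)·|x(v,j)|, then θ(y) ≥ |z|. -/
/-- `F₃`, the free group on three generators `a, b, c`. -/
abbrev F3 : Type := FreeGroup (Fin 3)

/-- The generator `a`. -/
def ga : F3 := FreeGroup.of 0
/-- The generator `b`. -/
def gb : F3 := FreeGroup.of 1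
/-- The generator `c`. -/
def gc : F3 := FreeGroup.of 2

/-- The standard generating set `S = {a, b, c, a⁻¹, b⁻¹, c⁻¹}`.
The word length `|u|` with respect to `S` is `FreeGroup.norm u`. -/
def Sgen : Set F3 := {ga, gb, gc, ga⁻¹, gb⁻¹, gc⁻¹}

/-- The `T`-word length of `g`: the least `n ≥ 0` such that `g` is a product of
`n` elements of `T` (the identity has length `0`). -/
noncomputable def wordLen (T : Set F3) (g : F3) : ℕ :=
  sInf {n : ℕ | ∃ l : List F3, (∀ x ∈ l, x ∈ T) ∧ l.prod = g ∧ l.length = n}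

/-- `x(v,j) = v b^(5^(2j-1)) v⁻¹ a^(5^(2j)) b^(5^(2j))`. -/
def xgen (v : F3) (j : ℕ) : F3 :=
  v * gb ^ (5 ^ (2 * j - 1)) * v⁻¹ * ga ^ (5 ^ (2 * j)) * gb ^ (5 ^ (2 * j))

/-- `X_∞ = ⋃_{j ≥ 2} X_j` where `X_j = {x(v,j) : |v| ≤ 5^j}`. -/
def Xinf : Set F3 :=
  ⋃ j ∈ {j : ℕ | 2 ≤ j}, {w : F3 | ∃ v : F3, v.norm ≤ 5 ^ j ∧ w = xgen v j}

/-- The generating set `X = X_∞ ∪ S`. -/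
def Xgen : Set F3 := Xinf ∪ Sgen

/-- The homomorphism `F₃ → ℤ` sending the `i`-th generator to `1` and the others to `0`,
valued in `Multiplicative ℤ`. -/
noncomputable def phi (i : Fin 3) : F3 →* Multiplicative ℤ :=
  FreeGroup.lift fun j => Multiplicative.ofAdd (if j = i then (1 : ℤ) else 0)

/-- `φ_a = phiZ 0`, `φ_b = phiZ 1`, `φ_c = phiZ 2` as `ℤ`-valued functions. -/
noncomputable def phiZ (i : Fin 3) (u : F3) : ℤ := Multiplicative.toAdd (phi i u)

/-- `θ = φ_a + φ_b`. -/
noncomputable def theta (u : F3) : ℤ := phiZ 0 u + phiZ 1 u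

open FreeGroup

lemma theta_mul (u w : F3) : theta (u * w) = theta u + theta w := by
  simp [theta, phiZ, map_mul]; ring

lemma theta_one : theta (1 : F3) = 0 := by simp [theta, phiZ]

lemma theta_inv (u : F3) : theta u⁻¹ = - theta u := by
  have := theta_mul u u⁻¹
  simp [theta_one] at this; omega

lemma theta_pow (u : F3) (n : ℕ) : theta (u ^ n) = n * theta u := by
  induction n with
  | zero => simpa using theta_one
  | succ n ih => rw [pow_succ, theta_mul, ih]; push_cast; ring

lemma phiZ_of (i j : Fin 3) : phiZ i (FreeGroup.of j) = if j = i then 1 else 0 := by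
  simp [phiZ, phi, FreeGroup.lift_apply_of]

lemma theta_of (j : Fin 3) : theta (FreeGroup.of j) = if j = 0 ∨ j = 1 then 1 else 0 := by
  fin_cases j <;> simp [theta, phiZ_of]

lemma mk_single (j : Fin 3) (b : Bool) :
    mk [(j, b)] = if b then FreeGroup.of j else (FreeGroup.of j)⁻¹ := by
  cases b
  · rw [if_neg (by simp), show (FreeGroup.of j : F3) = mk [(j,true)] from rfl, inv_mk]; rfl
  · rfl

lemma mk_cons (x : Fin 3 × Bool) (l : List (Fin 3 × Bool)) :
    mk (x :: l) = mk [x] * mk l := by rw [mul_mk]; rfl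

lemma abs_theta_mk_le (l : List (Fin 3 × Bool)) : |theta (mk l)| ≤ (l.length : ℤ) := by
  induction l with
  | nil => rw [show (mk [] : F3) = 1 from rfl, theta_one]; simp
  | cons x l ih =>
    rw [mk_cons, theta_mul]
    have h1 : |theta (mk [x])| ≤ 1 := by
      rcases x with ⟨j, b⟩
      rw [mk_single]
      cases b <;> simp [theta_inv, theta_of] <;> split <;> norm_num
    calc |theta (mk [x]) + theta (mk l)| ≤ |theta (mk [x])| + |theta (mk l)| := abs_add_le _ _
      _ ≤ 1 + l.length := by omega
      _ = ((x :: l).length : ℤ) := by simp; ring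

def IsGood (x : Fin 3 × Bool) : Prop := x = ((0 : Fin 3), true) ∨ x = ((1 : Fin 3), true)

lemma theta_mk_good (l : List (Fin 3 × Bool)) (h : ∀ x ∈ l, IsGood x) :
    theta (mk l) = l.length := by
  induction l with
  | nil => rw [show (mk [] : F3) = 1 from rfl, theta_one]; simp
  | cons x l ih =>
    rw [mk_cons, theta_mul, ih (fun y hy => h y (List.mem_cons_of_mem _ hy))]
    have hx := h x List.mem_cons_self
    rcases hx with rfl | rfl <;>
      simp [mk_single, theta_of] <;> push_cast <;> ring

theorem toWord_mul_of (g : F3) (i : Fin 3) :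
    (g * FreeGroup.of i).toWord = g.toWord ++ [(i,true)] ∨
    g.toWord = (g * FreeGroup.of i).toWord ++ [(i,false)] := by
  have hof : (of i : F3)⁻¹ = mk [(i,false)] := by
    rw [show (of i : F3) = mk [(i,true)] from rfl, inv_mk]; rfl
  have h2 : (of i)⁻¹ * g⁻¹ = mk ((i,false) :: toWord g⁻¹) := by
    rw [hof, ← mk_toWord (x := g⁻¹), mul_mk, mk_toWord]; rfl
  have h3 : ((of i)⁻¹ * g⁻¹).toWord = reduce ((i,false) :: toWord g⁻¹) := by
    rw [h2, toWord_mk]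
  rw [reduce.cons, reduce_toWord] at h3
  have h1 : g * of i = ((of i)⁻¹ * g⁻¹)⁻¹ := by group
  have hw : (g * of i).toWord = invRev (((of i)⁻¹ * g⁻¹).toWord) := by
    rw [h1, toWord_inv]
  have hg : g.toWord = invRev (toWord g⁻¹) := by
    rw [show g = g⁻¹⁻¹ by group, toWord_inv]; simp
  rcases hcase : toWord g⁻¹ with _ | ⟨hd, tl⟩
  · left
    rw [hcase] at h3 hg
    simp at h3
    rw [hw, h3, hg]
    simp [invRev]
  · rw [hcase] at h3 hg
    by_cases hc : hd = (i, true)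
    · right
      subst hc
      simp at h3
      rw [hw, h3, hg]
      simp [invRev]
    · left
      have : ¬((i,false).1 = hd.1 ∧ (i,false).2 = !hd.2) := by
        rcases hd with ⟨a, b⟩
        rcases b <;> simp_all <;> rintro rfl <;> simp_all
      have h3' : ((of i)⁻¹ * g⁻¹).toWord =
          if (i,false).1 = hd.1 ∧ (i,false).2 = !hd.2 then tl else (i,false) :: hd :: tl := h3
      rw [if_neg this] at h3'
      rw [hw, h3', hg]
      simp [invRev]

lemma good_suffix_pow (i : Fin 3) (hi : i = 0 ∨ i = 1) (n : ℕ) :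
    ∀ (g : F3) (L P : List (Fin 3 × Bool)), g.toWord = L ++ P → (∀ x ∈ P, IsGood x) →
    ∃ L' P', (g * FreeGroup.of i ^ n).toWord = L' ++ P' ∧ L'.length ≤ L.length ∧
      ∀ x ∈ P', IsGood x := by
  induction n with
  | zero => intro g L P h hP; exact ⟨L, P, by simpa using h, le_rfl, hP⟩
  | succ n ih =>
    intro g L P h hP
    obtain ⟨L', P', hw, hlen, hP'⟩ := ih g L P h hP
    rw [pow_succ, ← mul_assoc]
    rcases toWord_mul_of (g * FreeGroup.of i ^ n) i with hc | hc
    · refine ⟨L', P' ++ [(i, true)], by rw [hc, hw, List.append_assoc], hlen, ?_⟩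
      intro x hx
      rcases List.mem_append.1 hx with hx | hx
      · exact hP' x hx
      · simp at hx; subst hx
        rcases hi with rfl | rfl
        · exact Or.inl rfl
        · exact Or.inr rfl
    · -- cancellation case
      rw [hw] at hc
      rcases P'.eq_nil_or_concat with rfl | ⟨Q, a, rfl⟩
      · -- P' = [], so L' = newWord ++ [(i,false)]
        simp at hc
        refine ⟨(g * FreeGroup.of i ^ n * FreeGroup.of i).toWord, [], by simp, ?_, by simp⟩
        calc (g * FreeGroup.of i ^ n * FreeGroup.of i).toWord.length
            ≤ L'.length := by rw [hc]; simp
          _ ≤ L.length := hlen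
      · -- last element of P' is (i, false), contradicting goodness
        exfalso
        have ha : a = (i, false) := by
          have h2 : (L' ++ Q) ++ [a] = (g * FreeGroup.of i ^ n * FreeGroup.of i).toWord ++ [(i, false)] := by
            simpa [List.concat_eq_append, List.append_assoc] using hc
          have := (List.append_inj' h2 rfl).2
          simpa using this
        have := hP' a (by simp)
        rw [ha] at this
        rcases this with h' | h' <;> simp at h'

lemma toWord_append_of_norm (z y : F3) (h : (z * y).norm = z.norm + y.norm) :
    (z * y).toWord = z.toWord ++ y.toWord := by
  have hr : Red (z.toWord ++ y.toWord) ((z * y).toWord) := by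
    have hz : z * y = mk (z.toWord ++ y.toWord) := by rw [← mul_mk, mk_toWord, mk_toWord]
    rw [hz, toWord_mk]; exact reduce.red
  refine hr.sublist.eq_of_length ?_
  have h2 : (z.toWord ++ y.toWord).length = z.norm + y.norm := by
    simp [FreeGroup.norm]
  rw [h2, ← h]; rfl


/-- Lemma 3.6: if `x(v,j) = z y` with `z` an initial block of the reduced word and
`|z| < (1/2)|x(v,j)|`, then `θ(y) ≥ |z|`. -/
theorem theta_tail_ge (j : ℕ) (hj : 1 ≤ j) (v : F3) (hv : v.norm ≤ 5 ^ j)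
    (z y : F3) (hzy : xgen v j = z * y)
    (hred : (xgen v j).norm = z.norm + y.norm)
    (hlt : 2 * z.norm < (xgen v j).norm) :
    (z.norm : ℤ) ≤ theta y := by
  have hga : ga = FreeGroup.of 0 := rfl
  have hgb : gb = FreeGroup.of 1 := rfl
  set B := 5 ^ (2 * j - 1) with hB
  set A := 5 ^ (2 * j) with hA
  set V := 5 ^ j with hV
  have hAB : A = 5 * B := by
    have h7 : 5 ^ (2 * j - 1 + 1) = 5 ^ (2 * j) := by rw [show 2 * j - 1 + 1 = 2 * j by omega]
    rw [hA, hB, ← h7, pow_succ, Nat.mul_comm]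
  have hVB : V ≤ B := Nat.pow_le_pow_right (by norm_num) (by omega)
  -- θ(x) = B + 2A
  have hthx : theta (xgen v j) = (B : ℤ) + 2 * A := by
    unfold xgen
    simp only [theta_mul, theta_inv, theta_pow, hga, hgb, theta_of]
    norm_num
    rw [hB, hA]
    push_cast
    ring
  -- structure of the reduced word of x
  set p : F3 := v * gb ^ B * v⁻¹ with hp
  obtain ⟨L1, P1, h1, hL1, hP1⟩ :=
    good_suffix_pow 0 (Or.inl rfl) A p p.toWord [] (by simp) (by simp)
  obtain ⟨L2, P2, h2, hL2, hP2⟩ :=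
    good_suffix_pow 1 (Or.inr rfl) A _ L1 P1 h1 hP1
  have hxw : (xgen v j).toWord = L2 ++ P2 := by
    have h6 : xgen v j = p * FreeGroup.of 0 ^ A * FreeGroup.of 1 ^ A := rfl
    rw [h6]; exact h2
  have hnormp : p.norm ≤ 2 * V + B := by
    calc p.norm ≤ (v * gb ^ B).norm + v⁻¹.norm := FreeGroup.norm_mul_le _ _
      _ ≤ v.norm + (gb ^ B).norm + v.norm := by
          rw [norm_inv_eq]
          exact add_le_add (FreeGroup.norm_mul_le _ _) le_rfl
      _ ≤ V + B + V := by
          rw [hgb, norm_of_pow]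
          omega
      _ = 2 * V + B := by ring
  have hL2' : L2.length ≤ 2 * V + B := by
    have : p.toWord.length = p.norm := rfl
    omega
  -- split of the word of x
  have hsplit : (xgen v j).toWord = z.toWord ++ y.toWord := by
    rw [hzy]; exact toWord_append_of_norm z y (by rw [← hzy]; exact hred)
  have hthzy : theta z + theta y = (B : ℤ) + 2 * A := by
    rw [← theta_mul, ← hzy, hthx]
  have hznorm : z.toWord.length = z.norm := rfl
  have hynorm : y.toWord.length = y.norm := rfl
  by_cases hcase : L2.length ≤ z.norm
  · -- y lies in the all-good suffix
    have hyw : ∀ x ∈ y.toWord, IsGood x := by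
      intro x hx
      have h3 : y.toWord = (xgen v j).toWord.drop z.norm := by
        rw [hsplit, ← hznorm, List.drop_left]
      have h4 : y.toWord = P2.drop (z.norm - L2.length) := by
        rw [h3, hxw, List.drop_append, List.drop_eq_nil_of_le hcase,
          List.nil_append]
      rw [h4] at hx
      exact hP2 x (List.drop_subset _ _ hx)
    have hty : theta y = (y.norm : ℤ) := by
      conv_lhs => rw [← mk_toWord (x := y)]
      rw [theta_mk_good _ hyw, hynorm]
    rw [hty]
    have : z.norm < y.norm := by omega
    exact_mod_cast this.le
  · -- z is short
    push_neg at hcase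
    have hzsmall : z.norm + 1 ≤ 2 * V + B := by omega
    have habs : |theta z| ≤ (z.norm : ℤ) := by
      have := abs_theta_mk_le z.toWord
      rwa [mk_toWord, hznorm] at this
    have harith : 2 * z.norm ≤ B + 2 * A := by omega
    have h5 := abs_le.1 habs
    have hcast : (2 * z.norm : ℤ) ≤ (B : ℤ) + 2 * A := by exact_mod_cast harith
    push_cast at hcast
    linarith [h5.2, hthzy]
end

section
/- Let j ≥ 2 be a natural number and let u ∈ F₃. Then there exists N ∈ ℕ such that for all k ≥ N one has |a^{5^{2j}} b^{5^{2j}} · u · a^{5^{2k}} b^{5^{2k}}|_X ≤ |a^{5^{2j}} b^{5^{2j}}|_X + |u|_X + |a^{5^{2k}} b^{5^{2k}}|_X − 1 − 5^{2j−1}. (Equivalently, for the weight ω(t) = exp(|t|_X), one has ω(a^{5^{2j}} b^{5^{2j}} u a^{5^{2k}} b^{5^{2k}}) ≤ exp(−1 − 5^{2j−1}) · ω(a^{5^{2j}} b^{5^{2j}}) ω(u) ω(a^{5^{2k}} b^{5^{2k}}) for all k ≥ N.) -/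
noncomputable section

abbrev Rl : Type := AddMonoidAlgebra ℤ ℤ

def Ts (x : ℤ) : Rl := AddMonoidAlgebra.single x 1

lemma Ts_mul_single (x s c : ℤ) :
    Ts x * AddMonoidAlgebra.single s c = AddMonoidAlgebra.single (x + s) c := by
  rw [Ts, AddMonoidAlgebra.single_mul_single, one_mul]

lemma Ts_add (x y : ℤ) : Ts (x + y) = Ts x * Ts y := by
  rw [Ts, Ts, Ts, AddMonoidAlgebra.single_mul_single, one_mul]

lemma Ts_zero : Ts 0 = 1 := by
  rw [Ts, AddMonoidAlgebra.one_def]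

abbrev M2 : Type := Matrix (Fin 2) (Fin 2) Rl

def mk2 (x : ℤ) (r : Rl) : M2 := !![Ts x, r; 0, 1]

lemma mk2_mul (x y : ℤ) (r s : Rl) :
    mk2 x r * mk2 y s = mk2 (x + y) (Ts x * s + r) := by
  rw [mk2, mk2, mk2, Matrix.mul_fin_two, Ts_add]
  congr 1 <;> ring

lemma mk2_one : mk2 0 0 = 1 := by
  rw [mk2, Matrix.one_fin_two, Ts_zero]

lemma mk2_01 (x : ℤ) (r : Rl) : mk2 x r 0 1 = r := rfl

def Au : M2ˣ where
  val := mk2 1 0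
  inv := mk2 (-1) 0
  val_inv := by rw [mk2_mul]; simp [mk2_one]
  inv_val := by rw [mk2_mul]; simp [mk2_one]

def Bu : M2ˣ where
  val := mk2 0 1
  inv := mk2 0 (-1)
  val_inv := by rw [mk2_mul]; simp [Ts_zero, mk2_one]
  inv_val := by rw [mk2_mul]; simp [Ts_zero, mk2_one]

def psi : F3 →* M2ˣ := FreeGroup.lift ![Au, Bu, 1]

def Eh : F3 →* Multiplicative ℤ := FreeGroup.lift ![Multiplicative.ofAdd (1 : ℤ), 1, 1]

def Sg (g : F3) : ℤ := Multiplicative.toAdd (Eh g)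

def Fc (g : F3) : Rl := ((psi g : M2ˣ) : M2) 0 1

@[simp] lemma Sg_one : Sg 1 = 0 := by simp [Sg]

@[simp] lemma Sg_mul (g h : F3) : Sg (g * h) = Sg g + Sg h := by simp [Sg]

@[simp] lemma Sg_inv (g : F3) : Sg g⁻¹ = -Sg g := by simp [Sg]

@[simp] lemma Sg_ga : Sg ga = 1 := by simp [Sg, Eh, ga]

@[simp] lemma Sg_gb : Sg gb = 0 := by simp [Sg, Eh, gb]

@[simp] lemma Sg_gc : Sg gc = 0 := by simp [Sg, Eh, gc]

lemma psi_val (g : F3) : ((psi g : M2ˣ) : M2) = mk2 (Sg g) (Fc g) := by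
  suffices h : ∃ r, ((psi g : M2ˣ) : M2) = mk2 (Sg g) r by
    obtain ⟨r, hr⟩ := h
    have : Fc g = r := by rw [Fc, hr, mk2_01]
    rw [this, hr]
  induction g using FreeGroup.induction_on with
  | C1 => exact ⟨0, by simp [map_one, mk2_one]⟩
  | of x =>
    fin_cases x
    · refine ⟨0, ?_⟩
      show ((psi ga : M2ˣ) : M2) = mk2 (Sg ga) 0
      have h2 : psi ga = Au := by simp [psi, ga, FreeGroup.lift_apply_of]
      rw [Sg_ga, h2]; rfl
    · refine ⟨1, ?_⟩
      show ((psi gb : M2ˣ) : M2) = mk2 (Sg gb) 1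
      have h2 : psi gb = Bu := by simp [psi, gb, FreeGroup.lift_apply_of]
      rw [Sg_gb, h2]; rfl
    · refine ⟨0, ?_⟩
      show ((psi gc : M2ˣ) : M2) = mk2 (Sg gc) 0
      have h2 : psi gc = 1 := by simp [psi, gc, FreeGroup.lift_apply_of]
      rw [Sg_gc, h2, Units.val_one, ← mk2_one]
  | inv_of x ih =>
    obtain ⟨r, hr⟩ := ih
    refine ⟨-(Ts (-Sg (FreeGroup.of x)) * r), ?_⟩
    have hc : mk2 (-Sg (FreeGroup.of x)) (-(Ts (-Sg (FreeGroup.of x)) * r)) *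
        ((psi (FreeGroup.of x) : M2ˣ) : M2) = 1 := by
      rw [hr, mk2_mul]
      simp [mk2_one]
    rw [map_inv, Sg_inv]
    exact Units.inv_eq_of_mul_eq_one_left hc
  | mul g h ihg ihh =>
    obtain ⟨r1, h1⟩ := ihg
    obtain ⟨r2, h2⟩ := ihh
    exact ⟨Ts (Sg g) * r2 + r1, by rw [map_mul, Units.val_mul, h1, h2, mk2_mul, Sg_mul]⟩

lemma Fc_mul (g h : F3) : Fc (g * h) = Fc g + Ts (Sg g) * Fc h := by
  have h1 : ((psi (g * h) : M2ˣ) : M2) = mk2 (Sg g + Sg h) (Ts (Sg g) * Fc h + Fc g) := by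
    rw [map_mul, Units.val_mul, psi_val g, psi_val h, mk2_mul]
  have h2 := congrArg (fun m : M2 => m 0 1) h1
  simp only [psi_val (g * h), mk2_01] at h2
  rw [h2, add_comm]

@[simp] lemma Fc_one : Fc 1 = 0 := by
  rw [Fc, map_one, Units.val_one]
  exact Matrix.one_apply_ne (by decide)

lemma Fc_inv (g : F3) : Fc g⁻¹ = -(Ts (-Sg g) * Fc g) := by
  have h := Fc_mul g⁻¹ g
  rw [inv_mul_cancel, Fc_one, Sg_inv] at h
  have := h.symm
  rw [add_comm] at this
  rw [eq_neg_iff_add_eq_zero, add_comm]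
  exact this.symm ▸ rfl

@[simp] lemma Fc_ga : Fc ga = 0 := by
  have h2 : psi ga = Au := by simp [psi, ga, FreeGroup.lift_apply_of]
  rw [Fc, h2]; rfl

@[simp] lemma Fc_gb : Fc gb = AddMonoidAlgebra.single 0 1 := by
  have h2 : psi gb = Bu := by simp [psi, gb, FreeGroup.lift_apply_of]
  rw [Fc, h2]; rfl

@[simp] lemma Fc_gc : Fc gc = 0 := by
  have h2 : psi gc = 1 := by simp [psi, gc, FreeGroup.lift_apply_of]
  rw [Fc, h2, Units.val_one]
  exact Matrix.one_apply_ne (by decide)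

lemma Sg_ga_pow (t : ℕ) : Sg (ga ^ t) = t := by
  induction t with
  | zero => simp
  | succ n ih => rw [pow_succ, Sg_mul, ih, Sg_ga]; push_cast; ring

lemma Sg_gb_pow (t : ℕ) : Sg (gb ^ t) = 0 := by
  induction t with
  | zero => simp
  | succ n ih => rw [pow_succ, Sg_mul, ih, Sg_gb, add_zero]

lemma Fc_ga_pow (t : ℕ) : Fc (ga ^ t) = 0 := by
  induction t with
  | zero => simp
  | succ n ih => rw [pow_succ, Fc_mul, ih, Fc_ga, mul_zero, add_zero]

lemma Fc_gb_pow (t : ℕ) : Fc (gb ^ t) = AddMonoidAlgebra.single 0 (t : ℤ) := by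
  induction t with
  | zero => simp
  | succ n ih =>
    rw [pow_succ, Fc_mul, ih, Fc_gb, Sg_gb_pow, Ts_mul_single]
    rw [add_zero, ← AddMonoidAlgebra.single_add]
    push_cast
    ring_nf

lemma Sg_xgen (v : F3) (j : ℕ) : Sg (xgen v j) = (5 ^ (2 * j) : ℕ) := by
  rw [xgen]
  simp [Sg_ga_pow, Sg_gb_pow]

lemma Fc_xgen (v : F3) (j : ℕ) :
    Fc (xgen v j) = AddMonoidAlgebra.single (Sg v) ((5 ^ (2 * j - 1) : ℕ) : ℤ)
      + AddMonoidAlgebra.single ((5 ^ (2 * j) : ℕ) : ℤ) ((5 ^ (2 * j) : ℕ) : ℤ) := by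
  rw [xgen, Fc_mul, Fc_mul, Fc_mul, Fc_mul, Fc_inv, Fc_ga_pow, Fc_gb_pow, Fc_gb_pow]
  simp only [Sg_mul, Sg_inv, Sg_gb_pow, Sg_ga_pow, add_zero, mul_zero, Ts_mul_single]
  have h1 : Ts (Sg v) * -(Ts (-Sg v) * Fc v) = -Fc v := by
    rw [mul_neg, ← mul_assoc, ← Ts_add, add_neg_cancel, Ts_zero, one_mul]
  rw [h1]
  have h3 : Sg v + -Sg v + ((5 ^ (2 * j) : ℕ) : ℤ) = ((5 ^ (2 * j) : ℕ) : ℤ) := by ring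
  rw [h3]
  abel

lemma abs_Sg_le_norm (g : F3) : |Sg g| ≤ (g.norm : ℤ) := by
  have hrep : g = FreeGroup.mk g.toWord := (FreeGroup.mk_toWord).symm
  have key : ∀ L : List (Fin 3 × Bool),
      |Sg (FreeGroup.mk L)| ≤ (L.length : ℤ) := by
    intro L
    induction L with
    | nil =>
      have : FreeGroup.mk ([] : List (Fin 3 × Bool)) = 1 := rfl
      simp [this]
    | cons p L ih =>
      have hsplit : FreeGroup.mk (p :: L) = FreeGroup.mk [p] * FreeGroup.mk L := by
        rw [FreeGroup.mul_mk]
        rfl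
      rw [hsplit, Sg_mul]
      have hp : |Sg (FreeGroup.mk [p])| ≤ 1 := by
        rcases p with ⟨i, b⟩
        have h1 : FreeGroup.mk [(i, true)] = FreeGroup.of i := rfl
        have h2 : FreeGroup.mk [(i, false)] = (FreeGroup.of i)⁻¹ := by
          rw [← h1, FreeGroup.inv_mk]
          rfl
        have h3 : ∀ i : Fin 3, |Sg (FreeGroup.of i)| ≤ 1 := by
          intro i
          fin_cases i
          · show |Sg ga| ≤ 1
            rw [Sg_ga]; norm_num
          · show |Sg gb| ≤ 1
            rw [Sg_gb]; norm_num
          · show |Sg gc| ≤ 1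
            rw [Sg_gc]; norm_num
        cases b
        · rw [h2, Sg_inv, abs_neg]; exact h3 i
        · rw [h1]; exact h3 i
      calc |Sg (FreeGroup.mk [p]) + Sg (FreeGroup.mk L)|
          ≤ |Sg (FreeGroup.mk [p])| + |Sg (FreeGroup.mk L)| := abs_add_le _ _
        _ ≤ 1 + L.length := add_le_add hp ih
        _ = ((p :: L).length : ℤ) := by simp [add_comm]
  have hk := key g.toWord
  rw [← hrep] at hk
  simpa [FreeGroup.norm] using hk

def Phi (M : ℤ) (r : Rl) : ℤ := Finsupp.sum r.coeff fun s c => (if s = M then 5 else -5) * c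

lemma Phi_zero (M : ℤ) : Phi M 0 = 0 := by
  unfold Phi; rw [AddMonoidAlgebra.coeff_zero]; exact Finsupp.sum_zero_index

lemma Phi_add (M : ℤ) (r s : Rl) : Phi M (r + s) = Phi M r + Phi M s := by
  unfold Phi; rw [AddMonoidAlgebra.coeff_add]; exact
  Finsupp.sum_add_index' (fun a => mul_zero _) (fun a b c => mul_add _ _ _)

lemma Phi_single (M s c : ℤ) :
    Phi M (AddMonoidAlgebra.single s c) = (if s = M then 5 else -5) * c := by
  unfold Phi; rw [AddMonoidAlgebra.coeff_single]; exact
  Finsupp.sum_single_index (mul_zero _)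

lemma gen_bound (M : ℤ) (x : F3) (hx : x ∈ Xgen) (σ : ℤ) :
    Phi M (Ts σ * Fc x) ≤ 4 * Sg x + (if Sg x = 0 then 5 else 4) := by
  rcases hx with hx | hx
  · simp only [Xinf, Set.mem_iUnion, Set.mem_setOf_eq] at hx
    obtain ⟨jj, hjj, v, hnv, rfl⟩ := hx
    rw [Fc_xgen, Sg_xgen]
    set m : ℤ := ((5 ^ (2 * jj - 1) : ℕ) : ℤ) with hm
    set A : ℤ := ((5 ^ (2 * jj) : ℕ) : ℤ) with hA
    have hA5 : A = 5 * m := by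
      rw [hm, hA]
      push_cast
      rw [← pow_succ']
      congr 1
      omega
    have hm1 : 1 ≤ m := by
      rw [hm]
      exact_mod_cast Nat.one_le_iff_ne_zero.mpr (pow_ne_zero _ (by norm_num))
    have hAne : ¬(A = 0) := by omega
    have hVA : ¬(σ + Sg v = M ∧ σ + A = M) := by
      rintro ⟨h1, h2⟩
      have hva : Sg v = A := by omega
      have hb2 : (v.norm : ℤ) ≤ (5 : ℤ) ^ jj := by exact_mod_cast hnv
      have hb3 : (5 : ℤ) ^ jj < A := by
        rw [hA]
        push_cast
        exact pow_lt_pow_right₀ (by norm_num) (by omega)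
      have hb4 := (abs_le.mp ((abs_Sg_le_norm v).trans hb2)).2
      omega
    rw [mul_add, Ts_mul_single, Ts_mul_single, Phi_add, Phi_single, Phi_single, if_neg hAne]
    by_cases h1 : σ + Sg v = M <;> by_cases h2 : σ + A = M
    · exact absurd ⟨h1, h2⟩ hVA
    · rw [if_pos h1, if_neg h2]; omega
    · rw [if_neg h1, if_pos h2]; omega
    · rw [if_neg h1, if_neg h2]; omega
  · simp only [Sgen, Set.mem_insert_iff, Set.mem_singleton_iff] at hx
    rcases hx with rfl | rfl | rfl | rfl | rfl | rfl
    · rw [Fc_ga, mul_zero, Phi_zero, Sg_ga]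
      norm_num
    · rw [Fc_gb, Ts_mul_single, Phi_single, Sg_gb]
      split_ifs <;> omega
    · rw [Fc_gc, mul_zero, Phi_zero, Sg_gc]
      norm_num
    · rw [Fc_inv, Fc_ga, mul_zero, neg_zero, mul_zero, Phi_zero, Sg_inv, Sg_ga]
      norm_num
    · have hF : Fc gb⁻¹ = AddMonoidAlgebra.single (0 : ℤ) (-1 : ℤ) := by
        rw [Fc_inv, Fc_gb, Sg_gb, neg_zero, Ts_zero, one_mul, ← AddMonoidAlgebra.single_neg]
      rw [hF, Ts_mul_single, Phi_single, Sg_inv, Sg_gb, neg_zero]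
      split_ifs <;> omega
    · rw [Fc_inv, Fc_gc, mul_zero, neg_zero, mul_zero, Phi_zero, Sg_inv, Sg_gc]
      norm_num

lemma list_bound (M : ℤ) (L : List F3) (hmem : ∀ x ∈ L, x ∈ Xgen) : ∀ g : F3,
    Phi M (Fc (g * L.prod)) - 4 * Sg (g * L.prod) ≤
      Phi M (Fc g) - 4 * Sg g + 5 * L.length - (if Sg L.prod = 0 then 0 else 1) := by
  induction L with
  | nil =>
    intro g
    simp
  | cons x L ih =>
    intro g
    have hx := hmem x List.mem_cons_self
    have hL : ∀ y ∈ L, y ∈ Xgen := fun y hy => hmem y (List.mem_cons_of_mem _ hy)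
    have hstep : Phi M (Fc (g * x)) - 4 * Sg (g * x) ≤
        Phi M (Fc g) - 4 * Sg g + (if Sg x = 0 then 5 else 4) := by
      rw [Fc_mul, Phi_add, Sg_mul]
      have hgb := gen_bound M x hx (Sg g)
      split_ifs at hgb ⊢ <;> omega
    have hih := ih hL (g * x)
    rw [List.prod_cons, ← mul_assoc]
    have hsg : Sg (x * L.prod) = Sg x + Sg L.prod := Sg_mul _ _
    have hlen : ((x :: L).length : ℤ) = (L.length : ℤ) + 1 := by
      simp
    rw [hlen]
    have hfin : (if Sg x = 0 then (5:ℤ) else 4) + (5 * L.length) -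
        (if Sg L.prod = 0 then 0 else 1) ≤
        5 * ((L.length : ℤ) + 1) - (if Sg (x * L.prod) = 0 then 0 else 1) := by
      split_ifs <;> omega
    have h2 := hih
    split_ifs at hfin h2 hstep ⊢ <;> omega

lemma lower_bound {n : ℕ} (hn : 1 ≤ n) (L : List F3) (hmem : ∀ x ∈ L, x ∈ Xgen)
    (hprod : L.prod = ga ^ (5 ^ (2 * n)) * gb ^ (5 ^ (2 * n))) :
    5 ^ (2 * n - 1) + 1 ≤ L.length := by
  set M : ℤ := ((5 ^ (2 * n) : ℕ) : ℤ) with hMdef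
  have h := list_bound M L hmem 1
  rw [one_mul, hprod] at h
  have hSg : Sg (ga ^ (5 ^ (2 * n)) * gb ^ (5 ^ (2 * n))) = M := by
    rw [Sg_mul, Sg_ga_pow, Sg_gb_pow, add_zero]
  have hFc : Fc (ga ^ (5 ^ (2 * n)) * gb ^ (5 ^ (2 * n))) = AddMonoidAlgebra.single M M := by
    rw [Fc_mul, Fc_ga_pow, Fc_gb_pow, Sg_ga_pow, Ts_mul_single, add_zero, zero_add]
  have hMpos : (0 : ℤ) < M := by
    rw [hMdef]
    exact_mod_cast Nat.pos_of_ne_zero (pow_ne_zero _ (by norm_num))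
  rw [hSg, hFc, Phi_single, if_pos rfl, Fc_one, Phi_zero, Sg_one, if_neg (by omega)] at h
  have hM5 : M = 5 * ((5 ^ (2 * n - 1) : ℕ) : ℤ) := by
    rw [hMdef]
    push_cast
    rw [← pow_succ']
    congr 1
    omega
  have hgoal : ((5 ^ (2 * n - 1) : ℕ) : ℤ) + 1 ≤ (L.length : ℤ) := by omega
  exact_mod_cast hgoal

lemma exists_rep (g : F3) : ∃ l : List F3, (∀ x ∈ l, x ∈ Xgen) ∧ l.prod = g := by
  induction g using FreeGroup.induction_on with
  | C1 => exact ⟨[], by simp, by simp⟩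
  | of x =>
    refine ⟨[FreeGroup.of x], ?_, by simp⟩
    intro y hy
    simp only [List.mem_singleton] at hy
    subst hy
    refine Or.inr ?_
    fin_cases x
    · show ga ∈ Sgen
      simp [Sgen]
    · show gb ∈ Sgen
      simp [Sgen]
    · show gc ∈ Sgen
      simp [Sgen]
  | inv_of x ih =>
    refine ⟨[(FreeGroup.of x)⁻¹], ?_, by simp⟩
    intro y hy
    simp only [List.mem_singleton] at hy
    subst hy
    refine Or.inr ?_
    fin_cases x
    · show ga⁻¹ ∈ Sgen
      simp [Sgen]
    · show gb⁻¹ ∈ Sgen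
      simp [Sgen]
    · show gc⁻¹ ∈ Sgen
      simp [Sgen]
  | mul g h ihg ihh =>
    obtain ⟨l1, h11, h12⟩ := ihg
    obtain ⟨l2, h21, h22⟩ := ihh
    refine ⟨l1 ++ l2, ?_, by rw [List.prod_append, h12, h22]⟩
    intro y hy
    rcases List.mem_append.mp hy with hy | hy
    · exact h11 y hy
    · exact h21 y hy

lemma wordLen_exists (g : F3) : ∃ l : List F3,
    (∀ x ∈ l, x ∈ Xgen) ∧ l.prod = g ∧ l.length = wordLen Xgen g := by
  have hne : {n : ℕ | ∃ l : List F3, (∀ x ∈ l, x ∈ Xgen) ∧ l.prod = g ∧ l.length = n}.Nonempty := by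
    obtain ⟨l, h1, h2⟩ := exists_rep g
    exact ⟨l.length, l, h1, h2, rfl⟩
  exact Nat.sInf_mem hne

lemma wordLen_le (g : F3) (l : List F3) (h1 : ∀ x ∈ l, x ∈ Xgen) (h2 : l.prod = g) :
    wordLen Xgen g ≤ l.length :=
  Nat.sInf_le ⟨l, h1, h2, rfl⟩

/-- Lemma 4.1: for `j ≥ 2` and `u ∈ F₃`, there is `N` such that for all `k ≥ N`,
`|a^(5^(2j)) b^(5^(2j)) u a^(5^(2k)) b^(5^(2k))|_X
  ≤ |a^(5^(2j)) b^(5^(2j))|_X + |u|_X + |a^(5^(2k)) b^(5^(2k))|_X − 1 − 5^(2j-1)`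
(stated additively to avoid natural subtraction). -/
theorem wordLen_eventually_submultiplicative (j : ℕ) (hj : 2 ≤ j) (u : F3) :
    ∃ N : ℕ, ∀ k ≥ N,
      wordLen Xgen
          (ga ^ (5 ^ (2 * j)) * gb ^ (5 ^ (2 * j)) * u * ga ^ (5 ^ (2 * k)) * gb ^ (5 ^ (2 * k)))
        + 1 + 5 ^ (2 * j - 1)
      ≤ wordLen Xgen (ga ^ (5 ^ (2 * j)) * gb ^ (5 ^ (2 * j))) + wordLen Xgen u
        + wordLen Xgen (ga ^ (5 ^ (2 * k)) * gb ^ (5 ^ (2 * k))) := by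
  refine ⟨max (j + 1) (FreeGroup.norm u), fun k hk => ?_⟩
  have hkj : j + 1 ≤ k := le_trans (le_max_left _ _) hk
  have hku : FreeGroup.norm u ≤ k := le_trans (le_max_right _ _) hk
  have hk2 : 2 ≤ k := by omega
  obtain ⟨lu, hlu1, hlu2, hlu3⟩ := wordLen_exists u
  have hjk : 5 ^ (2 * j) ≤ 5 ^ (2 * k - 1) := Nat.pow_le_pow_right (by norm_num) (by omega)
  have hnormu : FreeGroup.norm u⁻¹ ≤ 5 ^ k := by
    rw [FreeGroup.norm_inv_eq]
    exact le_trans hku (le_of_lt (Nat.lt_pow_self (n := k) (by norm_num : 1 < 5)))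
  set Lw : List F3 := List.replicate (5 ^ (2 * j)) ga ++
      List.replicate (5 ^ (2 * k - 1) - 5 ^ (2 * j)) gb⁻¹ ++ lu ++ [xgen u⁻¹ k] with hLw
  have hmem : ∀ x ∈ Lw, x ∈ Xgen := by
    intro x hx
    rw [hLw] at hx
    simp only [List.mem_append, List.mem_replicate, List.mem_singleton] at hx
    rcases hx with ((hx | hx) | hx) | hx
    · refine Or.inr ?_
      rw [hx.2]
      simp [Sgen]
    · refine Or.inr ?_
      rw [hx.2]
      simp [Sgen]
    · exact hlu1 x hx
    · subst hx
      exact Or.inl (Set.mem_iUnion₂.mpr ⟨k, hk2, u⁻¹, hnormu, rfl⟩)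
  have hprod : Lw.prod =
      ga ^ (5 ^ (2 * j)) * gb ^ (5 ^ (2 * j)) * u * ga ^ (5 ^ (2 * k)) * gb ^ (5 ^ (2 * k)) := by
    rw [hLw]
    simp only [List.prod_append, List.prod_replicate, List.prod_cons, List.prod_nil, mul_one]
    rw [hlu2, xgen, inv_inv]
    have hsplit : gb ^ (5 ^ (2 * k - 1)) =
        gb ^ (5 ^ (2 * k - 1) - 5 ^ (2 * j)) * gb ^ (5 ^ (2 * j)) := by
      rw [← pow_add]
      congr 1
      omega
    rw [hsplit, inv_pow]
    group
  have hupper : wordLen Xgen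
      (ga ^ (5 ^ (2 * j)) * gb ^ (5 ^ (2 * j)) * u * ga ^ (5 ^ (2 * k)) * gb ^ (5 ^ (2 * k)))
      ≤ 5 ^ (2 * k - 1) + wordLen Xgen u + 1 := by
    have hle := wordLen_le _ Lw hmem hprod
    have hlen : Lw.length = 5 ^ (2 * j) + (5 ^ (2 * k - 1) - 5 ^ (2 * j)) + lu.length + 1 := by
      simp [hLw]
      omega
    omega
  obtain ⟨lA, hA1, hA2, hA3⟩ := wordLen_exists (ga ^ (5 ^ (2 * j)) * gb ^ (5 ^ (2 * j)))
  have hAlow := lower_bound (n := j) (by omega) lA hA1 hA2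
  obtain ⟨lB, hB1, hB2, hB3⟩ := wordLen_exists (ga ^ (5 ^ (2 * k)) * gb ^ (5 ^ (2 * k)))
  have hBlow := lower_bound (n := k) (by omega) lB hB1 hB2
  rw [hA3] at hAlow
  rw [hB3] at hBlow
  omega

end
end
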